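/- Let $g:\mathbb{S}^{m-1}\to\mathbb{R}$ be an integrable function on the unit sphere in $\mathbb{R}^m$ ($m\ge 2$) such that the matrix $M=\big(\int_{\mathbb{S}^{m-1}} x_i x_j\, g(x)\, d{\cal H}^{m-1}(x)\big)_{i,j=1}^m$ equals $c\, I_m$ for some $c\in\mathbb{R}$. Then $\int_{\mathbb{S}^{m-1}}\cdots\int_{\mathbb{S}^{m-1}} \det(x_1,\dots,x_m)^2\, g(x_1) g(x_2)\, d{\cal H}(x_1)\cdots d{\cal H}(x_m) = c_m \Big(\int_{\mathbb{S}^{m-1}} g\, d{\cal H}^{m-1}\Big)^2$, where $c_m>0$ is a constant depending only on $m$ (and the last $m-2$ variables are integrated without weights). -/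

import Mathlib

open MeasureTheory

def unitSphere (m : ℕ) : Set (EuclideanSpace ℝ (Fin m)) := Metric.sphere 0 1

/-!
Expanding `det² = ∑_{σ,τ} sign σ sign τ ∏ᵢ xᵢ(σ i) xᵢ(τ i)` and integrating one variable at a
time, each factor becomes a second moment of the weight carried by that variable. Isotropy kills
every term with `σ ≠ τ`; for the unweighted variables it holds because the surface measure is
invariant under permutations and sign changes of the coordinates. The integral is therefore
`m! c² aᵐ⁻²` with `a = |S^{m-1}| / m`, and the trace of the moment hypothesis gives `m c = ∫ g`.

The analytic input is `0 < |S^{m-1}| < ∞` for the Hausdorff measure `μH[m-1]`: the sphere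
projects 1-Lipschitz onto a hyperplane with image containing a ball, and it is covered by the
images of a compact ball under the stereographic parametrisations from two antipodal poles.
-/

open Metric Module Equiv
open scoped RealInnerProductSpace ENNReal Nat

section Sphere

variable {E : Type*} [NormedAddCommGroup E] [InnerProductSpace ℝ E]

lemma natCast_finrank_orthogonal_span_singleton [FiniteDimensional ℝ E] {v : E} (hv : v ≠ 0) :
    (finrank ℝ (ℝ ∙ v)ᗮ : ℝ) = finrank ℝ E - 1 := by
  rw [← (ℝ ∙ v).finrank_add_finrank_orthogonal, finrank_span_singleton hv]
  push_cast
  ring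

variable [MeasurableSpace E] [BorelSpace E]

lemma map_hausdorffMeasure_restrict_sphere (e : E ≃ₗᵢ[ℝ] E) (d : ℝ) :
    (μH[d].restrict (sphere (0 : E) 1)).map e = μH[d].restrict (sphere 0 1) := by
  conv_rhs => rw [← e.toIsometryEquiv.map_hausdorffMeasure d]
  rw [Measure.restrict_map e.toIsometryEquiv.continuous.measurable isClosed_sphere.measurableSet]
  simp

variable [FiniteDimensional ℝ E]

lemma hausdorffMeasure_hemisphere_lt_top {v : E} (hv : ‖v‖ = 1) :
    μH[(finrank ℝ E : ℝ) - 1] {x ∈ sphere (0 : E) 1 | ⟪v, x⟫ ≤ 0} < ∞ := by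
  set K := (ℝ ∙ v)ᗮ
  have hv0 : v ≠ 0 := norm_ne_zero_iff.1 (by simp [hv])
  rw [← natCast_finrank_orthogonal_span_singleton hv0]
  let f : K → E := fun w => stereoInvFunAux v w
  obtain ⟨L, hL⟩ : ∃ L, LipschitzOnWith L f (closedBall 0 2) :=
    (contDiff_stereoInvFunAux.comp K.subtypeL.contDiff).contDiffOn.exists_lipschitzOnWith
      (n := 1) one_ne_zero (convex_closedBall 0 2) (isCompact_closedBall 0 2)
  have hcover : {x ∈ sphere (0 : E) 1 | ⟪v, x⟫ ≤ 0} ⊆ f '' closedBall 0 2 := by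
    rintro x ⟨hx, hvx⟩
    have hxv : x ≠ v := by rintro rfl; norm_num [real_inner_self_eq_norm_sq, hv] at hvx
    refine ⟨stereoToFun v x, ?_, congrArg Subtype.val (stereo_left_inv hv (x := ⟨x, hx⟩) hxv)⟩
    have h1 : ‖K.orthogonalProjectionOnto x‖ ≤ 1 :=
      (K.norm_orthogonalProjectionOnto_apply_le x).trans (by simpa using hx.le)
    have h2 : |2 / (1 - ⟪v, x⟫)| ≤ 2 := by
      rw [abs_of_nonneg (by apply div_nonneg <;> linarith), div_le_iff₀ (by linarith)]
      nlinarith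
    rw [mem_closedBall_zero_iff, stereoToFun_apply, norm_smul, Real.norm_eq_abs]
    exact (mul_le_mul h2 h1 (norm_nonneg _) zero_le_two).trans_eq (mul_one 2)
  calc μH[(finrank ℝ K : ℝ)] {x ∈ sphere (0 : E) 1 | ⟪v, x⟫ ≤ 0}
      ≤ μH[(finrank ℝ K : ℝ)] (f '' closedBall 0 2) := measure_mono hcover
    _ ≤ (L : ℝ≥0∞) ^ (finrank ℝ K : ℝ) * μH[(finrank ℝ K : ℝ)] (closedBall (0 : K) 2) :=
      hL.hausdorffMeasure_image_le (Nat.cast_nonneg _)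
    _ < ∞ := ENNReal.mul_lt_top (by simp) (isCompact_closedBall _ _).measure_lt_top

lemma hausdorffMeasure_sphere_lt_top :
    μH[(finrank ℝ E : ℝ) - 1] (sphere (0 : E) 1) < ∞ := by
  rcases (sphere (0 : E) 1).eq_empty_or_nonempty with h | ⟨v, hv⟩
  · simp [h]
  rw [mem_sphere_zero_iff_norm] at hv
  have hsplit : sphere (0 : E) 1 ⊆ {x ∈ sphere (0 : E) 1 | ⟪v, x⟫ ≤ 0} ∪
      {x ∈ sphere (0 : E) 1 | ⟪-v, x⟫ ≤ 0} := by
    intro x hx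
    rcases le_total ⟪v, x⟫ 0 with h | h
    · exact Or.inl ⟨hx, h⟩
    · exact Or.inr ⟨hx, by simpa [inner_neg_left] using h⟩
  exact (measure_mono hsplit).trans_lt <| (measure_union_le _ _).trans_lt <|
    ENNReal.add_lt_top.2 ⟨hausdorffMeasure_hemisphere_lt_top hv,
      hausdorffMeasure_hemisphere_lt_top (by simpa using hv)⟩

lemma hausdorffMeasure_sphere_pos [Nontrivial E] :
    0 < μH[(finrank ℝ E : ℝ) - 1] (sphere (0 : E) 1) := by
  obtain ⟨v, hv⟩ := (NormedSpace.sphere_nonempty (x := (0 : E))).2 zero_le_one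
  rw [mem_sphere_zero_iff_norm] at hv
  set K := (ℝ ∙ v)ᗮ
  have hv0 : v ≠ 0 := norm_ne_zero_iff.1 (by simp [hv])
  rw [← natCast_finrank_orthogonal_span_singleton hv0]
  let P : E →L[ℝ] K := K.orthogonalProjectionOnto
  have hP : LipschitzWith 1 P :=
    P.lipschitz.weaken (by exact_mod_cast K.orthogonalProjectionOnto_norm_le)
  have hball : ball (0 : K) 1 ⊆ P '' sphere 0 1 := by
    intro w hw
    replace hw : ‖(w : E)‖ < 1 := by simpa using hw
    have hwv : ⟪(w : E), v⟫ = 0 :=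
      Submodule.mem_orthogonal_singleton_iff_inner_left.1 w.2
    refine ⟨w + √(1 - ‖(w : E)‖ ^ 2) • v, ?_, ?_⟩
    · have h := norm_add_sq_eq_norm_sq_add_norm_sq_real
        (x := (w : E)) (y := √(1 - ‖(w : E)‖ ^ 2) • v) (by simp [inner_smul_right, hwv])
      rw [norm_smul, Real.norm_of_nonneg (Real.sqrt_nonneg _), hv, mul_one,
        Real.mul_self_sqrt (by nlinarith [norm_nonneg (w : E)])] at h
      rw [mem_sphere_zero_iff_norm]
      nlinarith [norm_nonneg ((w : E) + √(1 - ‖(w : E)‖ ^ 2) • v)]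
    · simp [P, K, (ℝ ∙ v).orthogonalProjectionOnto_orthogonal_apply_eq_zero
        (Submodule.mem_span_singleton_self v)]
  calc 0 < μH[(finrank ℝ K : ℝ)] (ball (0 : K) 1) := isOpen_ball.measure_pos _ (by simp)
    _ ≤ μH[(finrank ℝ K : ℝ)] (P '' sphere 0 1) := measure_mono hball
    _ ≤ μH[(finrank ℝ K : ℝ)] (sphere (0 : E) 1) := by
      simpa using hP.hausdorffMeasure_image_le (Nat.cast_nonneg _) (sphere (0 : E) 1)

end Sphere

section Moments

variable {ι : Type*} [Fintype ι] {ν : Measure (EuclideanSpace ℝ ι)}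

lemma integrable_coord_mul_coord_mul (hν : ∀ᵐ x ∂ν, ‖x‖ = 1)
    {g : EuclideanSpace ℝ ι → ℝ} (hg : Integrable g ν) (p q : ι) :
    Integrable (fun x => x p * x q * g x) ν := by
  refine hg.bdd_mul (c := 1) (by fun_prop) ?_
  filter_upwards [hν] with x hx
  rw [norm_mul]
  have hp := hx ▸ PiLp.norm_apply_le x p
  have hq := hx ▸ PiLp.norm_apply_le x q
  nlinarith [norm_nonneg (x p), norm_nonneg (x q)]

lemma sum_integral_coord_mul_self_mul (hν : ∀ᵐ x ∂ν, ‖x‖ = 1)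
    {g : EuclideanSpace ℝ ι → ℝ} (hg : Integrable g ν) :
    ∑ p, ∫ x, x p * x p * g x ∂ν = ∫ x, g x ∂ν := by
  rw [← integral_finsetSum _ fun p _ => integrable_coord_mul_coord_mul hν hg p p]
  refine integral_congr_ae ?_
  filter_upwards [hν] with x hx
  rw [← Finset.sum_mul]
  simp [← sq, ← EuclideanSpace.real_norm_sq_eq, hx]

lemma integral_comp_linearIsometryEquiv (e : EuclideanSpace ℝ ι ≃ₗᵢ[ℝ] EuclideanSpace ℝ ι)
    (he : ν.map e = ν) (f : EuclideanSpace ℝ ι → ℝ) :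
    ∫ x, f (e x) ∂ν = ∫ x, f x ∂ν :=
  (MeasurePreserving.integral_comp ⟨e.continuous.measurable, he⟩
    e.toHomeomorph.measurableEmbedding f)

variable [DecidableEq ι]

lemma integral_coord_mul_coord_of_invariant [IsFiniteMeasure ν] (hν : ∀ᵐ x ∂ν, ‖x‖ = 1)
    (hinv : ∀ e : EuclideanSpace ℝ ι ≃ₗᵢ[ℝ] EuclideanSpace ℝ ι, ν.map e = ν) (p q : ι) :
    ∫ x, x p * x q ∂ν = if p = q then ν.real Set.univ / Fintype.card ι else 0 := by
  split_ifs with hpq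
  · subst hpq
    have hdiag : ∀ r, ∫ x, x r * x r ∂ν = ∫ x, x p * x p ∂ν := fun r => by
      simpa using integral_comp_linearIsometryEquiv
        (LinearIsometryEquiv.piLpCongrLeft 2 ℝ ℝ (Equiv.swap p r)) (hinv _) fun x => x p * x p
    have htrace := sum_integral_coord_mul_self_mul hν (integrable_const (1 : ℝ))
    simp only [mul_one, hdiag, Finset.sum_const, Finset.card_univ, integral_const, smul_eq_mul,
      nsmul_eq_mul] at htrace
    have hcard : (Fintype.card ι : ℝ) ≠ 0 := Nat.cast_ne_zero.2 (Fintype.card_pos_iff.2 ⟨p⟩).ne'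
    rw [eq_div_iff hcard, ← htrace, mul_comm]
  · have h := integral_comp_linearIsometryEquiv (LinearIsometryEquiv.piLpCongrRight 2 fun r =>
        if r = p then LinearIsometryEquiv.neg ℝ else LinearIsometryEquiv.refl ℝ ℝ)
      (hinv _) fun x => x p * x q
    simp only [LinearIsometryEquiv.piLpCongrRight_apply, if_pos, if_neg (Ne.symm hpq),
      LinearIsometryEquiv.coe_neg, LinearIsometryEquiv.coe_refl, id_eq, neg_mul, integral_neg] at h
    linarith

end Moments

section Determinant

variable {ι : Type*} [Fintype ι] [DecidableEq ι]

lemma Matrix.det_sq_eq_sum_sum {R : Type*} [CommRing R] (A : Matrix ι ι R) :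
    A.det ^ 2 = ∑ σ : Perm ι, ∑ τ : Perm ι,
      ((Perm.sign σ : ℤ) : R) * (Perm.sign τ : ℤ) * ∏ i, A (σ i) i * A (τ i) i := by
  simp_rw [sq, Matrix.det_apply', Finset.sum_mul_sum, Finset.prod_mul_distrib]
  exact Finset.sum_congr rfl fun _ _ => Finset.sum_congr rfl fun _ _ => by ring

lemma Equiv.Perm.prod_ite_apply_eq {M : Type*} [CommMonoidWithZero M] (σ τ : Perm ι)
    (d : ι → M) :
    ∏ i, (if σ i = τ i then d i else 0) = if σ = τ then ∏ i, d i else 0 := by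
  split_ifs with h
  · simp [h]
  · obtain ⟨i, hi⟩ : ∃ i, σ i ≠ τ i := by
      by_contra! h'
      exact h (Equiv.ext h')
    exact Finset.prod_eq_zero (Finset.mem_univ i) (if_neg hi)

theorem integral_det_sq_mul_prod_of_moments {μ : Measure (EuclideanSpace ℝ ι)} [SigmaFinite μ]
    (w : ι → EuclideanSpace ℝ ι → ℝ) (d : ι → ℝ)
    (hint : ∀ i p q, Integrable (fun y => y p * y q * w i y) μ)
    (hmom : ∀ i p q, ∫ y, y p * y q * w i y ∂μ = if p = q then d i else 0) :
    ∫ x : ι → EuclideanSpace ℝ ι, (Matrix.of fun i j => x j i).det ^ 2 * ∏ i, w i (x i)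
      ∂(Measure.pi fun _ => μ) = (Fintype.card ι)! * ∏ i, d i := by
  have hexpand : ∀ x : ι → EuclideanSpace ℝ ι,
      (Matrix.of fun i j => x j i).det ^ 2 * ∏ i, w i (x i) =
        ∑ σ : Perm ι, ∑ τ : Perm ι, ((Perm.sign σ : ℤ) : ℝ) * (Perm.sign τ : ℤ) *
          ∏ i, x i (σ i) * x i (τ i) * w i (x i) := fun x => by
    simp_rw [Matrix.det_sq_eq_sum_sum, Finset.sum_mul, Finset.prod_mul_distrib, mul_assoc,
      Matrix.of_apply]
  have hterm : ∀ σ τ : Perm ι, Integrable (fun x : ι → EuclideanSpace ℝ ι =>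
      ((Perm.sign σ : ℤ) : ℝ) * (Perm.sign τ : ℤ) * ∏ i, x i (σ i) * x i (τ i) * w i (x i))
      (Measure.pi fun _ => μ) := fun σ τ =>
    (Integrable.fintype_prod fun i => hint i (σ i) (τ i)).const_mul _
  calc _ = ∑ σ : Perm ι, ∑ τ : Perm ι, ((Perm.sign σ : ℤ) : ℝ) * (Perm.sign τ : ℤ) *
        ∏ i, ∫ y, y (σ i) * y (τ i) * w i y ∂μ := by
        simp_rw [hexpand]
        rw [integral_finsetSum _ fun σ _ => integrable_finsetSum _ fun τ _ => hterm σ τ]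
        refine Finset.sum_congr rfl fun σ _ => ?_
        rw [integral_finsetSum _ fun τ _ => hterm σ τ]
        refine Finset.sum_congr rfl fun τ _ => ?_
        rw [integral_const_mul,
          integral_fintype_prod_eq_prod fun i y => y (σ i) * y (τ i) * w i y]
    _ = ∑ σ : Perm ι, ∑ τ : Perm ι, ((Perm.sign σ : ℤ) : ℝ) * (Perm.sign τ : ℤ) *
        if σ = τ then ∏ i, d i else 0 := by
        simp_rw [hmom, Perm.prod_ite_apply_eq]
    _ = (Fintype.card ι)! * ∏ i, d i := by
        simp [← Int.cast_mul, ← Units.val_mul, Fintype.card_perm]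

end Determinant

lemma hausdorffMeasure_unitSphere_lt_top (m : ℕ) : μH[(m : ℝ) - 1] (unitSphere m) < ∞ := by
  simpa [unitSphere, finrank_euclideanSpace_fin] using
    hausdorffMeasure_sphere_lt_top (E := EuclideanSpace ℝ (Fin m))

instance isFiniteMeasure_restrict_unitSphere (m : ℕ) :
    IsFiniteMeasure (μH[(m : ℝ) - 1].restrict (unitSphere m)) :=
  ⟨by simpa using hausdorffMeasure_unitSphere_lt_top m⟩

lemma hausdorffMeasure_real_unitSphere_pos {m : ℕ} (hm : 0 < m) :
    0 < μH[(m : ℝ) - 1].real (unitSphere m) := by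
  have := Fin.pos_iff_nonempty.1 hm
  refine ENNReal.toReal_pos ?_ (hausdorffMeasure_unitSphere_lt_top m).ne
  simpa [unitSphere, finrank_euclideanSpace_fin] using
    (hausdorffMeasure_sphere_pos (E := EuclideanSpace ℝ (Fin m))).ne'

lemma ae_norm_eq_one_unitSphere (m : ℕ) :
    ∀ᵐ x ∂(μH[(m : ℝ) - 1].restrict (unitSphere m)), ‖x‖ = 1 :=
  ae_restrict_of_forall_mem isClosed_sphere.measurableSet fun _ => mem_sphere_zero_iff_norm.1

lemma integral_coord_mul_coord_unitSphere (m : ℕ) (p q : Fin m) :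
    ∫ x in unitSphere m, x p * x q ∂μH[(m : ℝ) - 1] =
      if p = q then μH[(m : ℝ) - 1].real (unitSphere m) / m else 0 := by
  simpa using integral_coord_mul_coord_of_invariant (ae_norm_eq_one_unitSphere m)
    (fun e => map_hausdorffMeasure_restrict_sphere e _) p q

/-- The determinant-expansion identity: if the second moment matrix of `g` is scalar,
then the iterated determinant integral with weight `g(x₁)g(x₂)` factors as a dimensional
constant times `(∫ g)²`. -/
theorem det_integral_of_isotropic (m : ℕ) (hm : 2 ≤ m) :
    ∃ C : ℝ, 0 < C ∧
      ∀ (g : EuclideanSpace ℝ (Fin m) → ℝ) (c : ℝ), Measurable g →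
        Integrable g (μH[(m : ℝ) - 1].restrict (unitSphere m)) →
        (∀ i j : Fin m,
          ∫ x in unitSphere m, x i * x j * g x ∂(μH[(m : ℝ) - 1]) =
            if i = j then c else 0) →
        ∫ x : Fin m → EuclideanSpace ℝ (Fin m),
            (Matrix.det (Matrix.of fun i j => x j i)) ^ 2 *
              g (x ⟨0, by omega⟩) * g (x ⟨1, by omega⟩)
            ∂(Measure.pi fun _ => μH[(m : ℝ) - 1].restrict (unitSphere m)) =
          C * (∫ x in unitSphere m, g x ∂(μH[(m : ℝ) - 1])) ^ 2 := by
  obtain ⟨k, rfl⟩ : ∃ k, m = k + 2 := ⟨m - 2, by omega⟩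
  set a := μH[((k + 2 : ℕ) : ℝ) - 1].real (unitSphere (k + 2)) / (k + 2 : ℕ)
  have ha : 0 < a := div_pos (hausdorffMeasure_real_unitSphere_pos (by omega)) (by positivity)
  refine ⟨(k + 2)! * a ^ k / (k + 2 : ℕ) ^ 2, by positivity, fun g c _ hg hmom => ?_⟩
  have hc : (k + 2 : ℕ) * c = ∫ x in unitSphere (k + 2), g x ∂μH[((k + 2 : ℕ) : ℝ) - 1] := by
    rw [← sum_integral_coord_mul_self_mul (ae_norm_eq_one_unitSphere _) hg]
    simp only [hmom, if_true, Finset.sum_const, Finset.card_univ, Fintype.card_fin, nsmul_eq_mul]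
  let w : Fin (k + 2) → EuclideanSpace ℝ (Fin (k + 2)) → ℝ := fun i =>
    if i.val < 2 then g else fun _ => 1
  have hint : ∀ i p q, Integrable (fun y => y p * y q * w i y)
      (μH[((k + 2 : ℕ) : ℝ) - 1].restrict (unitSphere (k + 2))) := fun i p q =>
    integrable_coord_mul_coord_mul (ae_norm_eq_one_unitSphere _)
      (by unfold w; split_ifs; exacts [hg, integrable_const 1]) p q
  have hmomw : ∀ i p q, ∫ y in unitSphere (k + 2), y p * y q * w i y ∂μH[((k + 2 : ℕ) : ℝ) - 1] =
      if p = q then (if i.val < 2 then c else a) else 0 := fun i p q => by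
    by_cases h : i.val < 2 <;> simp only [w, h, if_true, if_false, mul_one]
    exacts [hmom p q, integral_coord_mul_coord_unitSphere _ p q]
  have hw : ∀ x : Fin (k + 2) → EuclideanSpace ℝ (Fin (k + 2)),
      ∏ i, w i (x i) = g (x ⟨0, by omega⟩) * g (x ⟨1, by omega⟩) := fun x => by
    simp [w, Fin.prod_univ_succ]
  have hd : ∏ i : Fin (k + 2), (if i.val < 2 then c else a) = c ^ 2 * a ^ k := by
    simp [Fin.prod_univ_succ, Fin.val_succ]
    ring
  have key := integral_det_sq_mul_prod_of_moments w _ hint hmomw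
  simp only [hw, hd, Fintype.card_fin, ← mul_assoc] at key
  rw [key, ← hc]
  field_simp
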